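/- arXiv:1311.1261 — 3 statements merged into one kernel-verified Lean document; each statement's English description precedes it below -/
import Mathlib

section
/- Let k be a field of odd prime characteristic p and let V be a k-module. For every element x of the exterior algebra ⋀(V) over k, one has x^p = algebraMap k (⋀ V) ((ε x)^p), where ε : ⋀(V) → k is the augmentation homomorphism. In particular, x^p = 0 for every x in the augmentation ideal ker ε, so the image of the p-th power map on ⋀(V) is contained in k·1. -/
open ExteriorAlgebra

section Aux

variable {k : Type*} [Field k] {V : Type*} [AddCommGroup V] [Module k V]

/-- Product of `ι`'s over a list. -/
private def P (l : List V) : ExteriorAlgebra k V := (l.map (ι k)).prod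

private lemma P_nil : P ([] : List V) = (1 : ExteriorAlgebra k V) := rfl

private lemma P_cons (v : V) (l : List V) : P (v :: l) = ι k v * (P l : ExteriorAlgebra k V) := by
  simp [P]

private lemma P_append (l₁ l₂ : List V) :
    P (l₁ ++ l₂) = (P l₁ : ExteriorAlgebra k V) * P l₂ := by
  simp [P]

private lemma ι_anticomm (v w : V) :
    ι k v * ι k w = -(ι k w * ι k v) :=
  eq_neg_of_add_eq_zero_left (ι_add_mul_swap v w)

/-- Moving a single `ι v` across a product of `l.length` many `ι`'s picks up a sign. -/
private lemma ι_mul_P (v : V) (l : List V) :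
    ι k v * P l = ((-1 : k) ^ l.length) • ((P l : ExteriorAlgebra k V) * ι k v) := by
  induction l with
  | nil => simp [P_nil]
  | cons w l ih =>
      rw [P_cons, ← mul_assoc, ι_anticomm v w, neg_mul, mul_assoc, ih]
      rw [mul_smul_comm]
      simp only [List.length_cons, pow_succ, mul_smul, neg_smul, one_smul, neg_neg,
        smul_neg]
      rw [mul_assoc]

private lemma P_mul_P (l₁ l₂ : List V) :
    (P l₁ : ExteriorAlgebra k V) * P l₂ =
      ((-1 : k) ^ (l₁.length * l₂.length)) • (P l₂ * P l₁) := by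
  induction l₁ with
  | nil => simp [P_nil]
  | cons v l ih =>
      rw [P_cons, mul_assoc, ih, mul_smul_comm, ← mul_assoc, ι_mul_P, smul_mul_assoc,
        mul_assoc, ← P_cons, ← smul_assoc, smul_eq_mul, ← pow_add]
      congr 1
      rw [List.length_cons]
      ring_nf

private lemma P_mul_ι (v : V) (l : List V) :
    (P l : ExteriorAlgebra k V) * ι k v = ((-1 : k) ^ l.length) • (ι k v * P l) := by
  rw [ι_mul_P, smul_smul, ← pow_add]
  rw [Even.neg_one_pow ⟨l.length, rfl⟩, one_smul]

/-- A nonempty monomial squares to zero. -/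
private lemma P_sq (v : V) (l : List V) :
    (P (v :: l) : ExteriorAlgebra k V) * P (v :: l) = 0 := by
  rw [P_cons, ← mul_assoc, mul_assoc (ι k v) (P l) (ι k v), P_mul_ι, mul_smul_comm,
    smul_mul_assoc, ← mul_assoc, ι_sq_zero]
  simp

/-- Anything commuting with all `ι v` is central. -/
private lemma central_of_commute_ι (x : ExteriorAlgebra k V)
    (h : ∀ v : V, Commute x (ι k v)) : ∀ y, Commute x y := by
  intro y
  induction y using ExteriorAlgebra.induction with
  | algebraMap r => exact (Algebra.commutes r x).symm
  | ι v => exact h v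
  | mul a b ha hb => exact ha.mul_right hb
  | add a b ha hb => exact ha.add_right hb

/-- An even monomial is central. -/
private lemma P_central (l : List V) (hl : Even l.length) :
    ∀ y, Commute (P l : ExteriorAlgebra k V) y := by
  refine central_of_commute_ι _ fun v => ?_
  have := ι_mul_P (k := k) v l
  rw [hl.neg_one_pow, one_smul] at this
  exact this.symm

end Aux

set_option maxHeartbeats 1000000 in
/-- Over a field of odd prime characteristic `p`, every element `x` of an exterior algebra
satisfies `x ^ p = algebraMap k (⋀ V) ((ε x) ^ p)`, where `ε` is the augmentation; in
particular `x ^ p = 0` for `x` in the augmentation ideal. -/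
theorem exteriorAlgebra_pow_char
    (k : Type*) [Field k] (p : ℕ) [Fact p.Prime] (hp : Odd p) [CharP k p]
    (V : Type*) [AddCommGroup V] [Module k V] :
    (∀ x : ExteriorAlgebra k V,
      x ^ p = algebraMap k (ExteriorAlgebra k V)
        ((ExteriorAlgebra.algebraMapInv x) ^ p)) ∧
    (∀ x : ExteriorAlgebra k V, x ∈ RingHom.ker
        (ExteriorAlgebra.algebraMapInv (R := k) (M := V)) → x ^ p = 0) := by
  have hpprime := (Fact.out : p.Prime)
  have hp0 : p ≠ 0 := hpprime.ne_zero
  have hp2 : 2 ≤ p := hpprime.two_le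
  haveI : CharP (ExteriorAlgebra k V) p :=
    charP_of_injective_algebraMap (ExteriorAlgebra.algebraMap_leftInverse V).injective p
  have two_ne : (2 : k) ≠ 0 := by
    have hnd : ¬ (p ∣ 2) := by
      intro hdvd
      have := (Nat.prime_dvd_prime_iff_eq hpprime Nat.prime_two).mp hdvd
      rw [this] at hp
      exact (Nat.not_odd_iff_even.mpr even_two) hp
    intro h
    exact hnd ((CharP.cast_eq_zero_iff k p 2).mp (by exact_mod_cast h))
  -- odd and even generating sets
  set Sodd : Set (ExteriorAlgebra k V) :=
    {x | ∃ l : List V, Odd l.length ∧ x = P l} with hSodd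
  set Seven : Set (ExteriorAlgebra k V) :=
    {x | ∃ l : List V, Even l.length ∧ l ≠ [] ∧ x = P l} with hSeven
  -- odd elements square to zero
  have odd_anticomm : ∀ a ∈ Submodule.span k Sodd, ∀ b ∈ Submodule.span k Sodd,
      a * b + b * a = 0 := by
    intro a ha b hb
    induction ha using Submodule.span_induction with
    | mem x hx =>
        induction hb using Submodule.span_induction with
        | mem y hy =>
            obtain ⟨l₁, hl₁, rfl⟩ := hx
            obtain ⟨l₂, hl₂, rfl⟩ := hy
            have := P_mul_P (k := k) l₁ l₂
            rw [(hl₁.mul hl₂).neg_one_pow] at this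
            rw [this]
            simp
        | zero => simp
        | add y z _ _ h1 h2 =>
            have : x * (y + z) + (y + z) * x = (x * y + y * x) + (x * z + z * x) := by
              noncomm_ring
            rw [this, h1, h2, add_zero]
        | smul c y _ h1 =>
            rw [mul_smul_comm, smul_mul_assoc, ← smul_add, h1, smul_zero]
    | zero => simp
    | add x y _ _ h1 h2 =>
        have : (x + y) * b + b * (x + y) = (x * b + b * x) + (y * b + b * y) := by
          noncomm_ring
        rw [this, h1, h2, add_zero]
    | smul c x _ h1 =>
        rw [smul_mul_assoc, mul_smul_comm, ← smul_add, h1, smul_zero]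
  have odd_sq : ∀ a ∈ Submodule.span k Sodd, a * a = 0 := by
    intro a ha
    have h := odd_anticomm a ha a ha
    have h2 : (2 : k) • (a * a) = 0 := by
      rw [two_smul]; exact h
    exact (smul_eq_zero.mp h2).resolve_left two_ne
  -- even elements are central and p-th power zero
  have even_good : ∀ e ∈ Submodule.span k Seven,
      (∀ y, Commute e y) ∧ e ^ p = 0 := by
    intro e he
    induction he using Submodule.span_induction with
    | mem x hx =>
        obtain ⟨l, hl, hne, rfl⟩ := hx
        refine ⟨P_central l hl, ?_⟩
        obtain ⟨v, l', rfl⟩ := List.exists_cons_of_ne_nil hne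
        have hsq : (P (v :: l') : ExteriorAlgebra k V) ^ 2 = 0 := by
          rw [sq]; exact P_sq v l'
        calc (P (v :: l') : ExteriorAlgebra k V) ^ p
            = P (v :: l') ^ 2 * P (v :: l') ^ (p - 2) := by
              rw [← pow_add, Nat.add_sub_cancel' hp2]
          _ = 0 := by rw [hsq, zero_mul]
    | zero =>
        exact ⟨fun y => (Commute.zero_left y), by rw [zero_pow hp0]⟩
    | add x y _ _ h1 h2 =>
        refine ⟨fun z => (h1.1 z).add_left (h2.1 z), ?_⟩
        rw [add_pow_char_of_commute _ (h1.1 y), h1.2, h2.2, add_zero]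
    | smul c x _ h1 =>
        exact ⟨fun z => (h1.1 z).smul_left c, by rw [smul_pow, h1.2, smul_zero]⟩
  -- the augmentation ideal (as a span)
  set D : Submodule k (ExteriorAlgebra k V) := Submodule.span k (Sodd ∪ Seven) with hD
  have hDsup : D = Submodule.span k Sodd ⊔ Submodule.span k Seven := by
    rw [hD, Submodule.span_union]
  -- p-th powers vanish on D
  have D_pow : ∀ m ∈ D, m ^ p = 0 := by
    intro m hm
    rw [hDsup] at hm
    obtain ⟨o, ho, e, he, rfl⟩ := Submodule.mem_sup.mp hm
    obtain ⟨hecen, hep⟩ := even_good e he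
    have hosq : o * o = 0 := odd_sq o ho
    have hop : o ^ p = 0 := by
      calc o ^ p = o ^ 2 * o ^ (p - 2) := by rw [← pow_add, Nat.add_sub_cancel' hp2]
        _ = 0 := by rw [sq, hosq, zero_mul]
    rw [add_pow_char_of_commute _ ((hecen o).symm), hop, hep, add_zero]
  -- D is closed under multiplication
  have D_mul : ∀ a ∈ D, ∀ b ∈ D, a * b ∈ D := by
    have key : ∀ x ∈ Sodd ∪ Seven, ∀ y ∈ Sodd ∪ Seven, x * y ∈ D := by
      rintro x hx y hy
      have hgen : ∀ z ∈ Sodd ∪ Seven, ∃ l : List V, l ≠ [] ∧ z = P l := by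
        rintro z (⟨l, hl, rfl⟩ | ⟨l, hl, hne, rfl⟩)
        · refine ⟨l, ?_, rfl⟩
          rintro rfl
          simp [Nat.odd_iff] at hl
        · exact ⟨l, hne, rfl⟩
      obtain ⟨l₁, h₁, rfl⟩ := hgen x hx
      obtain ⟨l₂, h₂, rfl⟩ := hgen y hy
      rw [← P_append]
      apply Submodule.subset_span
      rcases Nat.even_or_odd (l₁ ++ l₂).length with he | ho
      · right
        exact ⟨l₁ ++ l₂, he, by simp [h₁], rfl⟩
      · left
        exact ⟨l₁ ++ l₂, ho, rfl⟩
    intro a ha b hb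
    induction ha using Submodule.span_induction with
    | mem x hx =>
        induction hb using Submodule.span_induction with
        | mem y hy => exact key x hx y hy
        | zero => simp
        | add y z _ _ h1 h2 => rw [mul_add]; exact D.add_mem h1 h2
        | smul c y _ h1 => rw [mul_smul_comm]; exact D.smul_mem c h1
    | zero => simp
    | add x y _ _ h1 h2 => rw [add_mul]; exact D.add_mem h1 h2
    | smul c x _ h1 => rw [smul_mul_assoc]; exact D.smul_mem c h1
  -- every element is a scalar plus an element of D
  have main : ∀ x : ExteriorAlgebra k V,
      x - algebraMap k (ExteriorAlgebra k V) (ExteriorAlgebra.algebraMapInv x) ∈ D := by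
    intro x
    induction x using ExteriorAlgebra.induction with
    | algebraMap r =>
        rw [ExteriorAlgebra.algebraMap_leftInverse V r, sub_self]
        exact D.zero_mem
    | ι v =>
        have hει : ExteriorAlgebra.algebraMapInv (R := k) (ι k v) = 0 := by
          simp [ExteriorAlgebra.algebraMapInv, ExteriorAlgebra.lift_ι_apply]
        rw [hει, map_zero, sub_zero]
        apply Submodule.subset_span
        left
        exact ⟨[v], by simp, by simp [P_cons, P_nil]⟩
    | add x y hx hy =>
        have heq : x + y - algebraMap k (ExteriorAlgebra k V)
              (ExteriorAlgebra.algebraMapInv (x + y)) =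
            (x - algebraMap k (ExteriorAlgebra k V) (ExteriorAlgebra.algebraMapInv x)) +
            (y - algebraMap k (ExteriorAlgebra k V) (ExteriorAlgebra.algebraMapInv y)) := by
          rw [map_add, map_add]
          abel
        rw [heq]
        exact D.add_mem hx hy
    | mul x y hx hy =>
        set a := algebraMap k (ExteriorAlgebra k V) (ExteriorAlgebra.algebraMapInv x) with ha
        set b := algebraMap k (ExteriorAlgebra k V) (ExteriorAlgebra.algebraMapInv y) with hb
        have heq : x * y - algebraMap k (ExteriorAlgebra k V)
              (ExteriorAlgebra.algebraMapInv (x * y)) =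
            (x - a) * (y - b) + (x - a) * b + a * (y - b) := by
          rw [map_mul, map_mul, ha, hb]
          noncomm_ring
        rw [heq]
        refine D.add_mem (D.add_mem (D_mul _ hx _ hy) ?_) ?_
        · rw [hb, show (x - a) * algebraMap k (ExteriorAlgebra k V)
              (ExteriorAlgebra.algebraMapInv y) =
            ExteriorAlgebra.algebraMapInv y • (x - a) from by
              rw [Algebra.algebraMap_eq_smul_one, mul_smul_comm, mul_one]]
          exact D.smul_mem _ hx
        · rw [ha, show algebraMap k (ExteriorAlgebra k V)
              (ExteriorAlgebra.algebraMapInv x) * (y - b) =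
            ExteriorAlgebra.algebraMapInv x • (y - b) from (Algebra.smul_def _ _).symm]
          exact D.smul_mem _ hy
  have first : ∀ x : ExteriorAlgebra k V, x ^ p = algebraMap k (ExteriorAlgebra k V)
      ((ExteriorAlgebra.algebraMapInv x) ^ p) := by
    intro x
    set a := algebraMap k (ExteriorAlgebra k V) (ExteriorAlgebra.algebraMapInv x) with ha
    have hx := main x
    calc x ^ p = (a + (x - a)) ^ p := by rw [show a + (x - a) = x from by abel]
      _ = a ^ p + (x - a) ^ p :=
          add_pow_char_of_commute _ (by rw [ha]; exact Algebra.commutes _ _)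
      _ = algebraMap k (ExteriorAlgebra k V) ((ExteriorAlgebra.algebraMapInv x) ^ p) := by
          rw [D_pow _ hx, add_zero, ha, ← map_pow]
  exact ⟨first, fun x hx => by
    rw [first x, show ExteriorAlgebra.algebraMapInv (R := k) x = 0 from hx, zero_pow hp0,
      map_zero]⟩
end

section
/- Let k be a field with char k ≠ 2 and let A be a k-algebra equipped with a ℤ/2-grading 𝒜 : ZMod 2 → Submodule k A making A a graded algebra, which is super-commutative in the sense that a * b = (−1)^{i·j} • (b * a) for all a ∈ 𝒜 i and b ∈ 𝒜 j. Let ε : A → k be a k-algebra homomorphism and let A⁺ := ker ε. Then the odd component of the square of the augmentation ideal equals A₀⁺·A₁: as k-submodules of A, (A⁺ · A⁺) ⊓ 𝒜 1 = (𝒜 0 ⊓ A⁺) · (𝒜 1). -/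
/-!
An odd element `c` satisfies `c * c = -(c * c)`, so `ε c ^ 2 = 0` as `2` is invertible in `k`;
hence `A₁ ⊆ A⁺`, and the even part of any `a ∈ A⁺` lies in `A⁺` as well. For `a, b ∈ A⁺` the odd
part of `a * b` is `a₀ b₁ + a₁ b₀ = a₀ b₁ + b₀ a₁`, since even elements are central for odd ones.
-/

open DirectSum

theorem DirectSum.decompose_zero_add_decompose_one {M σ : Type*} [AddCommMonoid M] [SetLike σ M]
    [AddSubmonoidClass σ M] (ℳ : ZMod 2 → σ) [Decomposition ℳ] (m : M) :
    (decompose ℳ m 0 : M) + decompose ℳ m 1 = m := by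
  classical
  conv_rhs => rw [← (decompose ℳ).symm_apply_apply m, ← sum_univ_of (decompose ℳ m)]
  simp only [decompose_symm_sum, decompose_symm_of]
  exact (Fin.sum_univ_two fun i : Fin 2 => (decompose ℳ m i : M)).symm

theorem DirectSum.coe_decompose_mul_one {A σ : Type*} [Semiring A] [SetLike σ A]
    [AddSubmonoidClass σ A] (𝒜 : ZMod 2 → σ) [GradedRing 𝒜] (a b : A) :
    (decompose 𝒜 (a * b) 1 : A) =
      decompose 𝒜 a 0 * decompose 𝒜 b 1 + decompose 𝒜 a 1 * decompose 𝒜 b 0 := by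
  have odd_mul : (decompose 𝒜 (decompose 𝒜 a 1 * b) 1 : A) =
      decompose 𝒜 a 1 * decompose 𝒜 b 0 :=
    coe_decompose_mul_add_of_left_mem 𝒜 (j := 0) (decompose 𝒜 a 1).2
  conv_lhs => rw [← decompose_zero_add_decompose_one 𝒜 a, add_mul, decompose_add, add_apply,
    AddMemClass.coe_add, coe_decompose_mul_of_left_mem_zero 𝒜 (decompose 𝒜 a 0).2, odd_mul]

theorem map_eq_zero_of_mul_self_eq_neg {A K F : Type*} [Ring A] [Ring K] [Nontrivial K]
    [NoZeroDivisors K] [FunLike F A K] [RingHomClass F A K] (hK : ringChar K ≠ 2) (f : F)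
    {c : A} (hc : c * c = -(c * c)) : f c = 0 := by
  have : -(f c * f c) = f c * f c := by simpa using congrArg f hc.symm
  exact mul_self_eq_zero.mp ((Ring.eq_self_iff_eq_zero_of_char_ne_two hK).mp this)

namespace Submodule

variable {R A : Type*} [CommRing R] [Ring A] [Algebra R A]
  (𝒜 : ZMod 2 → Submodule R A) [GradedAlgebra 𝒜] {I : Submodule R A}

theorem coe_decompose_zero_mem_inf (hI : 𝒜 1 ≤ I) {a : A} (ha : a ∈ I) :
    (decompose 𝒜 a 0 : A) ∈ 𝒜 0 ⊓ I := by
  refine ⟨(decompose 𝒜 a 0).2, ?_⟩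
  rw [eq_sub_of_add_eq (decompose_zero_add_decompose_one 𝒜 a)]
  exact I.sub_mem ha (hI (decompose 𝒜 a 1).2)

theorem mul_self_inf_one_eq_inf_zero_mul_one (hI : 𝒜 1 ≤ I)
    (hcomm : ∀ a ∈ 𝒜 1, ∀ b ∈ 𝒜 0, a * b = b * a) :
    (I * I) ⊓ 𝒜 1 = (𝒜 0 ⊓ I) * 𝒜 1 := by
  refine le_antisymm ?_ (le_inf ?_ ?_)
  · have odd_part : I * I ≤ ((𝒜 0 ⊓ I) * 𝒜 1).comap (GradedAlgebra.proj 𝒜 1) := by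
      refine mul_le.mpr fun a ha b hb => ?_
      rw [mem_comap, GradedAlgebra.proj_apply, coe_decompose_mul_one,
        hcomm _ (decompose 𝒜 a 1).2 _ (decompose 𝒜 b 0).2]
      exact add_mem (mul_mem_mul (coe_decompose_zero_mem_inf 𝒜 hI ha) (decompose 𝒜 b 1).2)
        (mul_mem_mul (coe_decompose_zero_mem_inf 𝒜 hI hb) (decompose 𝒜 a 1).2)
    rintro x ⟨hx, hx_odd⟩
    simpa only [mem_comap, GradedAlgebra.proj_apply, decompose_of_mem_same 𝒜 hx_odd] using odd_part hx
  · exact mul_le_mul' inf_le_right hI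
  · exact mul_le.mpr fun a ha b hb => by simpa using SetLike.mul_mem_graded ha.1 hb

end Submodule

/-- For a super-commutative `ℤ/2`-graded algebra `A` over a field `k` of characteristic `≠ 2`
with augmentation `ε : A → k` and augmentation ideal `A⁺ = ker ε`, the odd component of
`(A⁺)²` equals `A₀⁺ · A₁`:  `(A⁺ * A⁺) ⊓ 𝒜 1 = (𝒜 0 ⊓ A⁺) * 𝒜 1`. -/
theorem superCommutative_augmentationIdeal_sq_odd
    (k : Type*) [Field k] (hchar : ringChar k ≠ 2)
    (A : Type*) [Ring A] [Algebra k A]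
    (𝒜 : ZMod 2 → Submodule k A) [GradedAlgebra 𝒜]
    (hsc : ∀ (i j : ZMod 2), ∀ a ∈ 𝒜 i, ∀ b ∈ 𝒜 j,
      a * b = ((-1 : ℤ) ^ (i.val * j.val)) • (b * a))
    (ε : A →ₐ[k] k) :
    letI Aplus : Submodule k A := (RingHom.ker ε).restrictScalars k
    (Aplus * Aplus) ⊓ 𝒜 1 = ((𝒜 0) ⊓ Aplus) * (𝒜 1) := by
  have odd_le_ker : 𝒜 1 ≤ (RingHom.ker ε).restrictScalars k := fun c hc =>
    map_eq_zero_of_mul_self_eq_neg hchar ε (by simpa [ZMod.val_one] using hsc 1 1 c hc c hc)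
  exact Submodule.mul_self_inf_one_eq_inf_zero_mul_one 𝒜 odd_le_ker
    fun a ha b hb => by simpa using hsc 1 0 a ha b hb
end

section
/- Let k be a field of odd prime characteristic p and let A be a k-algebra equipped with a ℤ/2-grading 𝒜 : ZMod 2 → Submodule k A making A a graded algebra, which is super-commutative in the sense that a * b = (−1)^{i·j} • (b * a) for all a ∈ 𝒜 i and b ∈ 𝒜 j. Then the p-th power map x ↦ x^p on A satisfies: (a) x^p ∈ 𝒜 0 for every x ∈ A; (b) (x + y)^p = x^p + y^p for all x, y ∈ A; (c) (x * y)^p = x^p * y^p for all x, y ∈ A; so the p-th power map is a ring endomorphism of A whose image lies in the even component. -/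
/-- Auxiliary: in a ring where `(p : A) = 0` with `p` prime, if `a` commutes with `b`
then freshman's dream holds for `a + b`. -/
lemma aux_add_pow_char {A : Type*} [Ring A] (p : ℕ) [Fact p.Prime]
    (hpA : (p : A) = 0) {a b : A} (h : Commute a b) :
    (a + b) ^ p = a ^ p + b ^ p := by
  have hp : p.Prime := Fact.out
  rw [h.add_pow, Finset.sum_range_succ]
  have : ∑ m ∈ Finset.range p, a ^ m * b ^ (p - m) * (p.choose m : A) = b ^ p := by
    rw [Finset.sum_eq_single_of_mem 0 (Finset.mem_range.2 hp.pos)]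
    · simp
    · intro m hm hne
      have hmp : m < p := Finset.mem_range.1 hm
      obtain ⟨t, ht⟩ := hp.dvd_choose_self hne hmp
      rw [ht]
      push_cast
      rw [hpA]
      simp
  rw [this]
  simp [add_comm]

/-- Auxiliary: if `e` commutes with `o`, `o * o = 0` and `(p : A) = 0` with `p` prime,
then `(e + o) ^ p = e ^ p`. -/
lemma aux_pow_even {A : Type*} [Ring A] (p : ℕ) [Fact p.Prime]
    (hpA : (p : A) = 0) {e o : A} (h : Commute e o) (ho : o * o = 0) :
    (e + o) ^ p = e ^ p := by
  have hp : p.Prime := Fact.out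
  have hp1 : 1 ≤ p := hp.one_lt.le.trans' (by norm_num)
  rw [h.add_pow, Finset.sum_eq_single_of_mem p (Finset.mem_range.2 (Nat.lt_succ_self p))]
  · simp
  · intro m hm hne
    have hmp : m < p := lt_of_le_of_ne (Nat.lt_succ_iff.1 (Finset.mem_range.1 hm)) hne
    by_cases h1 : p - m = 1
    · have hm' : m = p - 1 := by omega
      rw [h1, hm', Nat.choose_symm hp1, Nat.choose_one_right, pow_one, hpA, mul_zero]
    · have h2 : 2 ≤ p - m := by omega
      have : o ^ (p - m) = 0 := by
        have heq : o ^ (p - m) = (o * o) * o ^ (p - m - 2) := by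
          rw [← sq, ← pow_add]
          congr 1
          omega
        rw [heq, ho, zero_mul]
      rw [this]
      simp

/-- In a super-commutative `ℤ/2`-graded algebra over a field of odd prime characteristic `p`,
the `p`-th power map lands in the even component, is additive, and is multiplicative; i.e.
it is a ring endomorphism with image in the even part. -/
theorem superCommutative_frobenius
    (k : Type*) [Field k] (p : ℕ) [Fact p.Prime] (hp : Odd p) [CharP k p]
    (A : Type*) [Ring A] [Algebra k A]
    (𝒜 : ZMod 2 → Submodule k A) [GradedAlgebra 𝒜]
    (hsc : ∀ (i j : ZMod 2), ∀ a ∈ 𝒜 i, ∀ b ∈ 𝒜 j,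
      a * b = ((-1 : ℤ) ^ (i.val * j.val)) • (b * a)) :
    (∀ x : A, x ^ p ∈ 𝒜 0) ∧
      (∀ x y : A, (x + y) ^ p = x ^ p + y ^ p) ∧
      (∀ x y : A, (x * y) ^ p = x ^ p * y ^ p) := by
  have hprime : p.Prime := Fact.out
  classical
  have hpne2 : p ≠ 2 := by rintro rfl; exact (by norm_num : ¬ Odd 2) hp
  -- `(p : A) = 0`
  have hpA : (p : A) = 0 := by
    rw [← map_natCast (algebraMap k A) p, CharP.cast_eq_zero k p, map_zero]
  -- `2 ≠ 0` in `k`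
  have h2k : (2 : k) ≠ 0 := by
    intro h
    have hd : p ∣ 2 := (CharP.cast_eq_zero_iff k p 2).1 (by exact_mod_cast h)
    have h1 := Nat.le_of_dvd (by norm_num) hd
    have h2 := hprime.two_le
    omega
  -- decomposition
  set D : A → ZMod 2 → A := fun x i => (DirectSum.decompose 𝒜 x i : A) with hD
  have hDmem : ∀ (x : A) (i : ZMod 2), D x i ∈ 𝒜 i := fun x i => SetLike.coe_mem _
  have hx : ∀ x : A, x = D x 0 + D x 1 := by
    intro x
    have h1 : ∑ i ∈ (DirectSum.decompose 𝒜 x).support, D x i = x :=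
      DirectSum.sum_support_decompose 𝒜 x
    have h2 : ∑ i : ZMod 2, D x i = ∑ i ∈ (DirectSum.decompose 𝒜 x).support, D x i :=
      (Finset.sum_subset (Finset.subset_univ _) (fun i _ hi => by
        simp [hD, DFinsupp.notMem_support_iff.1 hi])).symm
    have h3 : ∑ i : ZMod 2, D x i = D x 0 + D x 1 := by
      rw [show (Finset.univ : Finset (ZMod 2)) = {0, 1} from by decide]
      simp
    conv_lhs => rw [← h1]
    rw [← h2]
    exact h3
  -- even elements are central
  have hcent : ∀ a ∈ 𝒜 0, ∀ b : A, Commute a b := by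
    intro a ha b
    have key : ∀ j, ∀ c ∈ 𝒜 j, Commute a c := by
      intro j c hc
      have := hsc 0 j a ha c hc
      simpa [Commute, SemiconjBy] using this
    rw [hx b]
    exact (key 0 _ (hDmem b 0)).add_right (key 1 _ (hDmem b 1))
  -- odd elements square to zero
  have hsq : ∀ b ∈ 𝒜 1, b * b = 0 := by
    intro b hb
    have h := hsc 1 1 b hb b hb
    simp only [ZMod.val_one, mul_one, pow_one, neg_smul, one_smul] at h
    have h2 : (2 : k) • (b * b) = 0 := by
      rw [two_smul]
      nth_rewrite 1 [h]
      exact neg_add_cancel _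
    have := congrArg (fun z => (2 : k)⁻¹ • z) h2
    simpa [smul_smul, inv_mul_cancel₀ h2k] using this
  -- anticommutation of odd elements
  have hanti : ∀ a ∈ 𝒜 1, ∀ b ∈ 𝒜 1, b * a = -(a * b) := by
    intro a ha b hb
    have h := hsc 1 1 a ha b hb
    simp only [ZMod.val_one, mul_one, pow_one, neg_smul, one_smul] at h
    rw [h, neg_neg]
  -- the key computation: `x ^ p = (D x 0) ^ p`
  have hkey : ∀ x : A, x ^ p = D x 0 ^ p := by
    intro x
    conv_lhs => rw [hx x]
    exact aux_pow_even p hpA (hcent _ (hDmem x 0) _) (hsq _ (hDmem x 1))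
  -- evenness of powers of even things
  have hpowmem : ∀ a ∈ 𝒜 0, a ^ p ∈ 𝒜 0 := by
    intro a ha
    have := SetLike.pow_mem_graded p ha
    rwa [smul_zero] at this
  refine ⟨?_, ?_, ?_⟩
  · intro x
    rw [hkey x]
    exact hpowmem _ (hDmem x 0)
  · intro x y
    have hxy : x + y = (D x 0 + D y 0) + (D x 1 + D y 1) := by
      conv_lhs => rw [hx x, hx y]
      abel
    rw [hkey x, hkey y, hxy,
      aux_pow_even p hpA
        (((hcent _ (hDmem x 0) _).add_left (hcent _ (hDmem y 0) _)))
        (hsq _ (add_mem (hDmem x 1) (hDmem y 1))),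
      aux_add_pow_char p hpA (hcent _ (hDmem x 0) _)]
  · intro x y
    have h11 : ((1 : ZMod 2) + 1) = 0 := by decide
    have hmem_ee : D x 0 * D y 0 ∈ 𝒜 0 := by
      have := SetLike.mul_mem_graded (hDmem x 0) (hDmem y 0)
      simpa using this
    have hmem_oo : D x 1 * D y 1 ∈ 𝒜 0 := by
      have := SetLike.mul_mem_graded (hDmem x 1) (hDmem y 1)
      rwa [h11] at this
    have hmem_eo : D x 0 * D y 1 ∈ 𝒜 1 := by
      have := SetLike.mul_mem_graded (hDmem x 0) (hDmem y 1)
      simpa using this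
    have hmem_oe : D x 1 * D y 0 ∈ 𝒜 1 := by
      have := SetLike.mul_mem_graded (hDmem x 1) (hDmem y 0)
      simpa using this
    have hxy : x * y = (D x 0 * D y 0 + D x 1 * D y 1) + (D x 0 * D y 1 + D x 1 * D y 0) := by
      conv_lhs => rw [hx x, hx y]
      noncomm_ring
    have hoo2 : (D x 1 * D y 1) * (D x 1 * D y 1) = 0 := by
      have h1 : D y 1 * D x 1 = -(D x 1 * D y 1) := hanti _ (hDmem x 1) _ (hDmem y 1)
      calc (D x 1 * D y 1) * (D x 1 * D y 1)
          = D x 1 * (D y 1 * D x 1) * D y 1 := by noncomm_ring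
        _ = D x 1 * (-(D x 1 * D y 1)) * D y 1 := by rw [h1]
        _ = -((D x 1 * D x 1) * (D y 1 * D y 1)) := by noncomm_ring
        _ = 0 := by rw [hsq _ (hDmem x 1), zero_mul, neg_zero]
    have hoop : (D x 1 * D y 1) ^ p = 0 := by
      have heq : (D x 1 * D y 1) ^ p
          = ((D x 1 * D y 1) * (D x 1 * D y 1)) * (D x 1 * D y 1) ^ (p - 2) := by
        rw [← sq, ← pow_add]
        congr 1
        have := hprime.two_le
        omega
      rw [heq, hoo2, zero_mul]
    rw [hkey x, hkey y, hxy,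
      aux_pow_even p hpA
        ((hcent _ hmem_ee _).add_left (hcent _ hmem_oo _))
        (hsq _ (add_mem hmem_eo hmem_oe)),
      aux_add_pow_char p hpA (hcent _ hmem_ee _), hoop, add_zero,
      (hcent _ (hDmem x 0) (D y 0)).mul_pow]
end
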